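/- arXiv:1903.04970 — 3 statements merged into one kernel-verified Lean document; each statement's English description precedes it below -/
import Mathlib

section
/- Let d_S ≥ 1, d_M ≥ 1, β > 0, and machine energies 0 = ℰ_0 ≤ ⋯ ≤ ℰ_{d_M−1} = ℰ_max with Gibbs state τ_M = τ(β,ℰ), and set g = e^{−β ℰ_max}. If ρ is a density matrix on ℂ^{d_S} whose eigenvalue vector is majorized by p*(g,d_S), then for every n ≥ 1 and every sequence of unitaries U_1,…,U_n on ℂ^{d_S}⊗ℂ^{d_M}, the eigenvalue vector of the n-cycle output Λ_{U_n}∘⋯∘Λ_{U_1}(ρ) (the machine being reset to τ_M before each cycle, as encoded in the definition of Λ) is majorized by p*(g,d_S). -/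
open Filter Topology Kronecker Matrix
open scoped ComplexOrder

/-- Sum of the `k` largest entries of a real vector (maximum of all `k`-element subset sums). -/
noncomputable def sumKLargest {ι : Type*} [Fintype ι] (v : ι → ℝ) (k : ℕ) : ℝ :=
  sSup {x : ℝ | ∃ s : Finset ι, s.card = k ∧ ∑ i ∈ s, v i = x}

/-- `IsMajorizedBy x y` means `x ≺ y`: same total sum, and for every `k = 1,…,n` the
sum of the `k` largest entries of `x` is at most that of `y`. -/
def IsMajorizedBy {ι : Type*} [Fintype ι] (x y : ι → ℝ) : Prop :=
  (∑ i, x i = ∑ i, y i) ∧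
  ∀ k : ℕ, 1 ≤ k → k ≤ Fintype.card ι → sumKLargest x k ≤ sumKLargest y k

/-- The decreasing rearrangement of a real vector. -/
noncomputable def sortDesc {n : ℕ} (v : Fin n → ℝ) : Fin n → ℝ :=
  fun i => v (Tuple.sort v i.rev)

/-- The geometric probability vector `p*(g,d)` with entries `g^i / ∑_j g^j`. -/
noncomputable def pstar (g : ℝ) (d : ℕ) : Fin d → ℝ :=
  fun i => g ^ (i : ℕ) / ∑ j : Fin d, g ^ (j : ℕ)

/-- The Gibbs probability vector at inverse temperature `β` for energies `E`. -/
noncomputable def gibbsVec {m : ℕ} (β : ℝ) (E : Fin m → ℝ) : Fin m → ℝ :=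
  fun j => Real.exp (-(β * E j)) / ∑ k : Fin m, Real.exp (-(β * E k))

/-- The Gibbs state: diagonal density matrix with the Gibbs vector on the diagonal. -/
noncomputable def gibbsState {m : ℕ} (β : ℝ) (E : Fin m → ℝ) : Matrix (Fin m) (Fin m) ℂ :=
  Matrix.diagonal fun j => (gibbsVec β E j : ℂ)

/-- The eigenvalues of a Hermitian matrix (junk value `0` if not Hermitian). -/
noncomputable def eigVec {ι : Type*} [Fintype ι] [DecidableEq ι] (ρ : Matrix ι ι ℂ) : ι → ℝ := by
  classical exact if h : ρ.IsHermitian then h.eigenvalues else 0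

/-- The eigenvalue vector of a Hermitian matrix, listed in decreasing order. -/
noncomputable def eigVecDesc {d : ℕ} (ρ : Matrix (Fin d) (Fin d) ℂ) : Fin d → ℝ :=
  sortDesc (eigVec ρ)

/-- Partial trace over the machine: `(Tr_M X)_{s,s'} = ∑_m X_{(s,m),(s',m)}`. -/
noncomputable def ptraceM {dS dM : ℕ}
    (X : Matrix (Fin dS × Fin dM) (Fin dS × Fin dM) ℂ) : Matrix (Fin dS) (Fin dS) ℂ :=
  Matrix.of fun s s' => ∑ m : Fin dM, X (s, m) (s', m)

/-- The coherent operation `Λ_U(ρ) = Tr_M (U (ρ ⊗ τ_M) U†)` where `τ_M` is the diagonal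
machine state with diagonal `τ`. -/
noncomputable def coherentOp {dS dM : ℕ} (τ : Fin dM → ℝ)
    (U : Matrix (Fin dS × Fin dM) (Fin dS × Fin dM) ℂ)
    (ρ : Matrix (Fin dS) (Fin dS) ℂ) : Matrix (Fin dS) (Fin dS) ℂ :=
  ptraceM (U * (ρ ⊗ₖ Matrix.diagonal fun j => (τ j : ℂ)) * Uᴴ)

/-- `Λ_{U_n} ∘ ⋯ ∘ Λ_{U_1} (ρ)`: the machine is reset to its Gibbs state before each cycle. -/
noncomputable def coherentSeq {dS dM : ℕ} (τ : Fin dM → ℝ) {n : ℕ}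
    (U : Fin n → Matrix (Fin dS × Fin dM) (Fin dS × Fin dM) ℂ)
    (ρ : Matrix (Fin dS) (Fin dS) ℂ) : Matrix (Fin dS) (Fin dS) ℂ :=
  (List.ofFn U).foldl (fun σ V => coherentOp τ V σ) ρ

/-- The optimal coherent operation `A`: the diagonal matrix whose `i`-th diagonal entry is
`∑_{j<d_M} λ_{i·d_M+j}` where `λ` is the decreasing list of eigenvalues of `ρ ⊗ τ_M`. -/
noncomputable def Aopt {dS dM : ℕ} (τ : Fin dM → ℝ)
    (ρ : Matrix (Fin dS) (Fin dS) ℂ) : Matrix (Fin dS) (Fin dS) ℂ :=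
  Matrix.diagonal fun i : Fin dS =>
    ((∑ j : Fin dM,
      sortDesc
        (fun k : Fin (dS * dM) =>
          eigVec (ρ ⊗ₖ Matrix.diagonal fun l => (τ l : ℂ)) (finProdFinEquiv.symm k))
        ⟨(i : ℕ) * dM + (j : ℕ), by
          calc (i : ℕ) * dM + (j : ℕ) < (i : ℕ) * dM + dM := by
                exact Nat.add_lt_add_left j.isLt _
            _ = ((i : ℕ) + 1) * dM := by ring
            _ ≤ dS * dM := Nat.mul_le_mul_right dM i.isLt⟩ : ℝ) : ℂ)

/-- `Δ_i(p) = a·p_i − b·p_{i−1}` for `i ≥ 1` (and `0` for `i = 0`). -/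
noncomputable def delta (a b : ℝ) {d : ℕ} (p : Fin d → ℝ) (i : Fin d) : ℝ :=
  if (i : ℕ) = 0 then 0
  else a * p i - b * p ⟨(i : ℕ) - 1, Nat.lt_of_le_of_lt (Nat.sub_le _ _) i.isLt⟩

/-- The max-swap map `B`: if some `Δ_i(p) > 0`, pick an index `k̄` maximizing `Δ`,
move `Δ_{k̄}(p)` of population from level `k̄` to level `k̄−1`, and rearrange decreasingly;
otherwise `p` is left unchanged. -/
noncomputable def maxSwap (a b : ℝ) {d : ℕ} (p : Fin d → ℝ) : Fin d → ℝ := by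
  classical
  exact
    if h : ∃ k : Fin d, 0 < delta a b p k ∧ ∀ i, delta a b p i ≤ delta a b p k then
      sortDesc (fun i =>
        if i = h.choose then p h.choose - delta a b p h.choose
        else if (i : ℕ) = (h.choose : ℕ) - 1 then p i + delta a b p h.choose
        else p i)
    else p

/-!
Let `P` be the spectral projector of `Λ_U(ρ)` onto `k` of its eigenvectors. Then
`Tr (P Λ_U(ρ)) = Tr ((P ⊗ 1) U (ρ ⊗ τ_M) U†)`, and in an eigenbasis of `ρ ⊗ τ_M` the effect
`P ⊗ 1` has a diagonal of weights in `[0, 1]` with total mass `k d_M`. So the `k` largest output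
eigenvalues sum to at most the sum of some `k d_M` products `λ_i τ_j` of eigenvalues of `ρ` and of
`τ_M`. Split such a set along the machine index `j` into fibres of sizes `n_j`, `∑ n_j = k d_M`;
by the majorization hypothesis it sums to at most `∑_j τ_j S(n_j)`, where `S(n) = ∑_{i<n} p*_i`.
Now `S` is concave with increments `g^n / Z` and `g τ_max ≤ τ_j ≤ τ_max`, so
`τ_j S(n) ≤ τ_j S(k) + τ_max g^k (n - k) / Z` for every `n`; summing over `j` gives `S(k)`.
Hence one cycle preserves majorization by `p*`, and so do `n` cycles.
-/

open Finset

section SumKLargest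

variable {ι : Type*} [Fintype ι]

lemma bddAbove_finset_sums (v : ι → ℝ) (k : ℕ) :
    BddAbove {x : ℝ | ∃ s : Finset ι, s.card = k ∧ ∑ i ∈ s, v i = x} :=
  (Set.finite_range fun s : Finset ι => ∑ i ∈ s, v i).bddAbove.mono
    fun _ ⟨s, _, hs⟩ => Set.mem_range.2 ⟨s, hs⟩

lemma sum_le_sumKLargest (v : ι → ℝ) (s : Finset ι) : ∑ i ∈ s, v i ≤ sumKLargest v s.card :=
  le_csSup (bddAbove_finset_sums v _) ⟨s, rfl, rfl⟩

lemma sumKLargest_le {v : ι → ℝ} {k : ℕ} (hk : k ≤ Fintype.card ι) {c : ℝ}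
    (h : ∀ s : Finset ι, s.card = k → ∑ i ∈ s, v i ≤ c) : sumKLargest v k ≤ c := by
  obtain ⟨t, -, ht⟩ := exists_subset_card_eq (s := (univ : Finset ι)) (by simpa using hk)
  exact csSup_le ⟨_, t, ht, rfl⟩ fun _ ⟨s, hs, hx⟩ => hx ▸ h s hs

lemma sumKLargest_comp_equiv (v : ι → ℝ) (e : ι ≃ ι) (k : ℕ) :
    sumKLargest (v ∘ e) k = sumKLargest v k := by
  unfold sumKLargest
  congr 1
  ext x
  constructor
  · rintro ⟨s, rfl, rfl⟩
    exact ⟨s.map e.toEmbedding, s.card_map _, by simp⟩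
  · rintro ⟨s, rfl, rfl⟩
    exact ⟨s.map e.symm.toEmbedding, s.card_map _, by simp⟩

lemma exists_finset_separating (μ : ι → ℝ) {m : ℕ} (hm : m ≤ Fintype.card ι) :
    ∃ (T : Finset ι) (c : ℝ), T.card = m ∧ (∀ a ∈ T, c ≤ μ a) ∧ ∀ b ∉ T, μ b ≤ c := by
  classical
  induction m with
  | zero =>
    obtain ⟨c, hc⟩ := (Set.finite_range μ).bddAbove
    exact ⟨∅, c, rfl, by simp, fun b _ => hc ⟨b, rfl⟩⟩
  | succ m ih =>
    obtain ⟨T, c, hTm, hTc, hcT⟩ := ih (by omega)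
    obtain ⟨b₀, hb₀, hmax⟩ := Tᶜ.exists_max_image μ
      (by rw [← card_pos, card_compl]; omega)
    rw [mem_compl] at hb₀
    refine ⟨insert b₀ T, μ b₀, by rw [card_insert_of_notMem hb₀, hTm], ?_, fun b hb =>
      hmax b (mem_compl.2 fun h => hb (mem_insert_of_mem h))⟩
    simp only [forall_mem_insert, le_refl, true_and]
    exact fun a ha => (hcT b₀ hb₀).trans (hTc a ha)

lemma sum_mul_le_sum_of_separating {μ d : ι → ℝ} {T : Finset ι} {c : ℝ}
    (hT : ∀ a ∈ T, c ≤ μ a) (hTc : ∀ b ∉ T, μ b ≤ c)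
    (hd0 : ∀ α, 0 ≤ d α) (hd1 : ∀ α, d α ≤ 1) (hd : ∑ α, d α = T.card) :
    ∑ α, d α * μ α ≤ ∑ α ∈ T, μ α := by
  classical
  have key : ∀ α, d α * (μ α - c) ≤ if α ∈ T then μ α - c else 0 := by
    intro α
    split_ifs with h
    · exact mul_le_of_le_one_left (sub_nonneg.2 (hT α h)) (hd1 α)
    · exact mul_nonpos_of_nonneg_of_nonpos (hd0 α) (sub_nonpos.2 (hTc α h))
  have := sum_le_sum fun α (_ : α ∈ univ) => key α
  simp only [sum_ite_mem, univ_inter, mul_sub, sum_sub_distrib, ← sum_mul, hd, sum_const,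
    nsmul_eq_mul] at this
  linarith

lemma sumKLargest_eq_sum_of_separating {μ : ι → ℝ} {T : Finset ι} {c : ℝ}
    (hT : ∀ a ∈ T, c ≤ μ a) (hTc : ∀ b ∉ T, μ b ≤ c) :
    sumKLargest μ T.card = ∑ i ∈ T, μ i := by
  classical
  refine le_antisymm (sumKLargest_le T.card_le_univ fun s hs => ?_) (sum_le_sumKLargest μ T)
  have := sum_mul_le_sum_of_separating hT hTc (d := fun i => if i ∈ s then 1 else 0)
    (fun _ => by split_ifs <;> norm_num) (fun _ => by split_ifs <;> norm_num) (by simp [hs])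
  simpa [ite_mul, sum_ite_mem] using this

lemma sum_mul_le_sumKLargest (μ : ι → ℝ) {d : ι → ℝ} (hd0 : ∀ α, 0 ≤ d α)
    (hd1 : ∀ α, d α ≤ 1) {m : ℕ} (hd : ∑ α, d α = m) :
    ∑ α, d α * μ α ≤ sumKLargest μ m := by
  have hm : (m : ℝ) ≤ Fintype.card ι := by
    simpa [← hd] using sum_le_sum fun α (_ : α ∈ univ) => hd1 α
  obtain ⟨T, c, rfl, hT, hTc⟩ := exists_finset_separating μ (by exact_mod_cast hm)
  exact (sum_mul_le_sum_of_separating hT hTc hd0 hd1 hd).trans (sum_le_sumKLargest μ T)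

lemma sumKLargest_zero (v : ι → ℝ) : sumKLargest v 0 = 0 :=
  le_antisymm (sumKLargest_le (Nat.zero_le _) fun s hs => by simp [card_eq_zero.1 hs])
    (by simpa using sum_le_sumKLargest v ∅)

lemma IsMajorizedBy.sumKLargest_le {x y : ι → ℝ} (h : IsMajorizedBy x y) {k : ℕ}
    (hk : k ≤ Fintype.card ι) : sumKLargest x k ≤ sumKLargest y k := by
  rcases k.eq_zero_or_pos with rfl | hk0
  · simp [sumKLargest_zero]
  · exact h.2 k hk0 hk

end SumKLargest

lemma sortDesc_eq_comp {n : ℕ} (v : Fin n → ℝ) :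
    sortDesc v = v ∘ (Fin.revPerm.trans (Tuple.sort v)) := rfl

lemma sumKLargest_sortDesc {n : ℕ} (v : Fin n → ℝ) (k : ℕ) :
    sumKLargest (sortDesc v) k = sumKLargest v k := by
  rw [sortDesc_eq_comp, sumKLargest_comp_equiv]

lemma sum_sortDesc {n : ℕ} (v : Fin n → ℝ) : ∑ i, sortDesc v i = ∑ i, v i :=
  Equiv.sum_comp (Fin.revPerm.trans (Tuple.sort v)) v

/-- `∑_{i<k} p*(g,d)_i`, as a formula valid for every `k`. -/
noncomputable def pstarTopSum (g : ℝ) (d k : ℕ) : ℝ :=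
  (∑ i ∈ range k, g ^ i) / ∑ i ∈ range d, g ^ i

lemma sumKLargest_pstar {g : ℝ} (hg0 : 0 ≤ g) (hg1 : g ≤ 1) {d k : ℕ} (hk : k ≤ d) :
    sumKLargest (pstar g d) k = pstarTopSum g d k := by
  set Z := ∑ i ∈ range d, g ^ i
  have hpstar : ∀ i : Fin d, pstar g d i = g ^ (i : ℕ) / Z := fun i => by
    rw [pstar, Fin.sum_univ_eq_sum_range (g ^ ·)]
  have hZ : 0 ≤ Z := sum_nonneg fun i _ => pow_nonneg hg0 i
  set T := univ.map (Fin.castLEEmb hk)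
  have hT : ∀ i, i ∈ T ↔ (i : ℕ) < k := fun i =>
    ⟨fun h => by obtain ⟨j, -, rfl⟩ := mem_map.1 h; exact j.isLt,
      fun h => mem_map.2 ⟨⟨i, h⟩, mem_univ _, rfl⟩⟩
  have hsep : ∀ a ∈ T, g ^ k / Z ≤ pstar g d a := fun a ha => by
    rw [hpstar]
    exact div_le_div_of_nonneg_right (pow_le_pow_of_le_one hg0 hg1 ((hT a).1 ha).le) hZ
  have hsep' : ∀ b ∉ T, pstar g d b ≤ g ^ k / Z := fun b hb => by
    rw [hpstar]
    exact div_le_div_of_nonneg_right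
      (pow_le_pow_of_le_one hg0 hg1 (not_lt.1 fun h => hb ((hT b).2 h))) hZ
  have hcard : T.card = k := by simp [T]
  rw [← hcard, sumKLargest_eq_sum_of_separating hsep hsep', hcard, pstarTopSum, sum_div]
  simp only [T, sum_map, hpstar]
  exact Fin.sum_univ_eq_sum_range (fun i => g ^ i / Z) k

lemma mul_geom_sum_le {g c q : ℝ} (hg0 : 0 ≤ g) (hg1 : g ≤ 1) (hq : 0 ≤ q) (hcq : c ≤ q)
    (hgc : g * q ≤ c) (n k : ℕ) :
    c * ∑ i ∈ range n, g ^ i ≤ c * ∑ i ∈ range k, g ^ i + q * g ^ k * (n - k) := by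
  rcases le_total k n with hkn | hnk
  · set X := ∑ i ∈ Ico k n, g ^ i
    have hX : X = ∑ i ∈ range n, g ^ i - ∑ i ∈ range k, g ^ i := sum_Ico_eq_sub _ hkn
    have hX0 : 0 ≤ X := sum_nonneg fun i _ => pow_nonneg hg0 i
    have hXle : X ≤ (n - k) * g ^ k := by
      have := sum_le_card_nsmul (Ico k n) (g ^ ·) (g ^ k) fun i hi =>
        pow_le_pow_of_le_one hg0 hg1 (mem_Ico.1 hi).1
      simpa [nsmul_eq_mul, Nat.cast_sub hkn] using this
    nlinarith [mul_le_mul_of_nonneg_right hcq hX0, mul_le_mul_of_nonneg_left hXle hq]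
  · set Y := ∑ i ∈ Ico n k, g ^ i
    have hY : Y = ∑ i ∈ range k, g ^ i - ∑ i ∈ range n, g ^ i := sum_Ico_eq_sub _ hnk
    have hY0 : 0 ≤ Y := sum_nonneg fun i _ => pow_nonneg hg0 i
    have hgY : (k - n) * g ^ k ≤ g * Y := by
      have := card_nsmul_le_sum (Ico n k) (g ^ ·.succ) (g ^ k) fun i hi =>
        pow_le_pow_of_le_one hg0 hg1 (mem_Ico.1 hi).2
      simpa [nsmul_eq_mul, Nat.cast_sub hnk, mul_sum, pow_succ', Y] using this
    nlinarith [mul_le_mul_of_nonneg_right hgc hY0, mul_le_mul_of_nonneg_left hgY hq]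

theorem sumKLargest_mul_le_pstarTopSum {ι κ : Type*} [Fintype ι] [Fintype κ] {g : ℝ}
    (hg0 : 0 ≤ g) (hg1 : g ≤ 1) {d : ℕ} {x : ι → ℝ}
    (hx : ∀ s : Finset ι, ∑ i ∈ s, x i ≤ pstarTopSum g d s.card) {q : κ → ℝ}
    (hq0 : ∀ t, 0 ≤ q t) (hq1 : ∑ t, q t = 1) (hgq : ∀ t t', g * q t' ≤ q t)
    {k : ℕ} (hk : k ≤ Fintype.card ι) :
    sumKLargest (fun α : ι × κ => x α.1 * q α.2) (k * Fintype.card κ) ≤ pstarTopSum g d k := by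
  classical
  obtain ⟨t₀, -, ht₀⟩ := univ.exists_max_image q
    (nonempty_of_sum_ne_zero (hq1.symm ▸ one_ne_zero))
  refine sumKLargest_le (by simpa using Nat.mul_le_mul_right _ hk) fun T hT => ?_
  set F : κ → Finset ι := fun t => univ.filter fun i => (i, t) ∈ T
  have hfiber : ∀ f : ι × κ → ℝ, ∑ α ∈ T, f α = ∑ t, ∑ i ∈ F t, f (i, t) := fun f => by
    simp only [F, sum_filter]
    rw [← Fintype.sum_prod_type_right (fun α => if α ∈ T then f α else 0), sum_ite_mem,
      univ_inter]
  have hcard : ∑ t, ((F t).card : ℝ) = k * Fintype.card κ := by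
    simpa [hT] using (hfiber fun _ => 1).symm
  set Z := ∑ i ∈ range d, g ^ i with hZdef
  have hZ : 0 ≤ Z := sum_nonneg fun i _ => pow_nonneg hg0 i
  have tangent : ∀ (t : κ) (n : ℕ), q t * pstarTopSum g d n
      ≤ q t * pstarTopSum g d k + q t₀ * g ^ k / Z * (n - k) := fun t n => by
    have := div_le_div_of_nonneg_right
      (mul_geom_sum_le hg0 hg1 (hq0 t₀) (ht₀ t (mem_univ t)) (hgq t t₀) n k) hZ
    rw [pstarTopSum, pstarTopSum, ← hZdef, mul_div_assoc', mul_div_assoc', div_mul_eq_mul_div,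
      ← add_div]
    exact this
  calc ∑ α ∈ T, x α.1 * q α.2 = ∑ t, q t * ∑ i ∈ F t, x i := by
        simp only [hfiber, mul_sum, mul_comm]
    _ ≤ ∑ t, q t * pstarTopSum g d (F t).card :=
        sum_le_sum fun t _ => mul_le_mul_of_nonneg_left (hx _) (hq0 t)
    _ ≤ ∑ t, (q t * pstarTopSum g d k + q t₀ * g ^ k / Z * ((F t).card - k)) :=
        sum_le_sum fun t _ => tangent t _
    _ = pstarTopSum g d k := by
        rw [sum_add_distrib, ← sum_mul, hq1, ← mul_sum, sum_sub_distrib, hcard]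
        simp [mul_comm]

open Matrix

section Effect

variable {κ : Type*} [Fintype κ] [DecidableEq κ]

def IsEffect (Q : Matrix κ κ ℂ) : Prop :=
  Q.PosSemidef ∧ (1 - Q).PosSemidef

lemma IsEffect.conjTranspose_mul_mul {Q N : Matrix κ κ ℂ} (hQ : IsEffect Q)
    (hN : N ∈ unitaryGroup κ ℂ) : IsEffect (Nᴴ * Q * N) := by
  have hNN : Nᴴ * N = 1 := mem_unitaryGroup_iff'.1 hN
  refine ⟨hQ.1.conjTranspose_mul_mul_same N, ?_⟩
  rw [show 1 - Nᴴ * Q * N = Nᴴ * (1 - Q) * N by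
    rw [Matrix.mul_sub, Matrix.sub_mul, Matrix.mul_one, hNN]]
  exact hQ.2.conjTranspose_mul_mul_same N

lemma IsEffect.kronecker_one {ι : Type*} [Fintype ι] [DecidableEq ι] {P : Matrix ι ι ℂ}
    (hP : IsEffect P) : IsEffect (P ⊗ₖ (1 : Matrix κ κ ℂ)) := by
  refine ⟨hP.1.kronecker PosSemidef.one, ?_⟩
  rw [show 1 - P ⊗ₖ (1 : Matrix κ κ ℂ) = (1 - P) ⊗ₖ 1 by
    rw [sub_eq_iff_eq_add', ← add_kronecker, add_sub_cancel, one_kronecker_one]]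
  exact hP.2.kronecker PosSemidef.one

/-- Half of Ky Fan's maximum principle: the diagonal of `N† Q N` is a weight vector with entries
in `[0, 1]` and total mass `m`. -/
theorem IsEffect.re_trace_mul_le_sumKLargest {Q N : Matrix κ κ ℂ} (hQ : IsEffect Q) {m : ℕ}
    (hm : Q.trace = m) (hN : N ∈ unitaryGroup κ ℂ) (μ : κ → ℝ) :
    (Q * (N * diagonal (fun α => (μ α : ℂ)) * Nᴴ)).trace.re ≤ sumKLargest μ m := by
  set R := Nᴴ * Q * N
  have hR : IsEffect R := hQ.conjTranspose_mul_mul hN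
  have htrace : (Q * (N * diagonal (fun α => (μ α : ℂ)) * Nᴴ)).trace
      = ∑ α, R α α * μ α := by
    rw [show Q * (N * diagonal (fun α => (μ α : ℂ)) * Nᴴ)
        = Q * N * diagonal (fun α => (μ α : ℂ)) * Nᴴ by simp only [Matrix.mul_assoc],
      trace_mul_comm, ← Matrix.mul_assoc, ← Matrix.mul_assoc]
    simp [trace, mul_diagonal, R]
  have hRtrace : R.trace = m := by
    have hNN : N * Nᴴ = 1 := mem_unitaryGroup_iff.1 hN
    rw [Matrix.trace_mul_cycle, hNN, Matrix.one_mul, hm]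
  have hd0 : ∀ α, 0 ≤ (R α α).re := fun α => (Complex.le_def.1 hR.1.diag_nonneg).1
  have hd1 : ∀ α, (R α α).re ≤ 1 := fun α => by
    simpa using (Complex.le_def.1 (hR.2.diag_nonneg (i := α))).1
  have hdsum : ∑ α, (R α α).re = m := by
    simpa [trace] using congrArg Complex.re hRtrace
  rw [htrace, Complex.re_sum]
  simpa only [Complex.re_mul_ofReal] using sum_mul_le_sumKLargest μ hd0 hd1 hdsum

end Effect

section Spectral

variable {ι : Type*} [Fintype ι] [DecidableEq ι] {A : Matrix ι ι ℂ}

lemma eigVec_eq (hA : A.IsHermitian) : eigVec A = hA.eigenvalues := by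
  rw [eigVec, dif_pos hA]

lemma Matrix.IsHermitian.spectral_decomposition (hA : A.IsHermitian) :
    A = (hA.eigenvectorUnitary : Matrix ι ι ℂ) * diagonal (fun i => (hA.eigenvalues i : ℂ))
      * (hA.eigenvectorUnitary : Matrix ι ι ℂ)ᴴ := by
  conv_lhs => rw [hA.spectral_theorem, Unitary.conjStarAlgAut_apply]
  rfl

lemma exists_isEffect_re_trace_mul_eq (hA : A.IsHermitian) (s : Finset ι) :
    ∃ P : Matrix ι ι ℂ, IsEffect P ∧ P.trace = s.card ∧
      (P * A).trace.re = ∑ i ∈ s, hA.eigenvalues i := by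
  set W : Matrix ι ι ℂ := (hA.eigenvectorUnitary : Matrix ι ι ℂ)
  have hW : W ∈ unitaryGroup ι ℂ := hA.eigenvectorUnitary.2
  have hWW : Wᴴ * W = 1 := mem_unitaryGroup_iff'.1 hW
  set χ : Matrix ι ι ℂ := diagonal fun i => if i ∈ s then 1 else 0 with hχdef
  have hχ : IsEffect χ := by
    rw [hχdef, IsEffect, ← diagonal_one, diagonal_sub, posSemidef_diagonal_iff,
      posSemidef_diagonal_iff]
    constructor <;> intro i <;> split_ifs <;> simp
  have hP := hχ.conjTranspose_mul_mul (Unitary.star_mem hW)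
  rw [star_eq_conjTranspose, conjTranspose_conjTranspose] at hP
  refine ⟨W * χ * Wᴴ, hP, ?_, ?_⟩
  · rw [trace_mul_cycle, hWW, Matrix.one_mul, trace_diagonal, sum_boole]
    simp
  · conv_lhs => rw [hA.spectral_decomposition]
    rw [show W * χ * Wᴴ * (W * diagonal (fun i => (hA.eigenvalues i : ℂ)) * Wᴴ)
        = W * (χ * diagonal (fun i => (hA.eigenvalues i : ℂ))) * Wᴴ by
      simp only [Matrix.mul_assoc, ← Matrix.mul_assoc Wᴴ W, hWW, Matrix.one_mul],
      trace_mul_cycle, hWW, Matrix.one_mul, diagonal_mul_diagonal, trace_diagonal]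
    simp [ite_mul, sum_ite_mem]

lemma sum_eigVecDesc {d : ℕ} {A : Matrix (Fin d) (Fin d) ℂ} (hA : A.IsHermitian) :
    ∑ i, eigVecDesc A i = A.trace.re := by
  simp [eigVecDesc, sum_sortDesc, eigVec_eq hA, hA.trace_eq_sum_eigenvalues]

lemma sumKLargest_eigVecDesc {d : ℕ} {A : Matrix (Fin d) (Fin d) ℂ} (hA : A.IsHermitian)
    (k : ℕ) : sumKLargest (eigVecDesc A) k = sumKLargest hA.eigenvalues k := by
  rw [eigVecDesc, sumKLargest_sortDesc, eigVec_eq hA]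

end Spectral

section CoherentOp

variable {dS dM : ℕ}

lemma trace_ptraceM (X : Matrix (Fin dS × Fin dM) (Fin dS × Fin dM) ℂ) :
    (ptraceM X).trace = X.trace := by
  simp [trace, ptraceM, Fintype.sum_prod_type]

lemma conjTranspose_ptraceM (X : Matrix (Fin dS × Fin dM) (Fin dS × Fin dM) ℂ) :
    (ptraceM X)ᴴ = ptraceM Xᴴ := by
  ext
  simp [ptraceM, star_sum]

lemma trace_mul_ptraceM (A : Matrix (Fin dS) (Fin dS) ℂ)
    (X : Matrix (Fin dS × Fin dM) (Fin dS × Fin dM) ℂ) :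
    (A * ptraceM X).trace = ((A ⊗ₖ (1 : Matrix (Fin dM) (Fin dM) ℂ)) * X).trace := by
  have lhs : (A * ptraceM X).trace = ∑ s, ∑ s', ∑ m, A s s' * X (s', m) (s, m) := by
    simp only [trace, Matrix.diag, mul_apply, ptraceM, of_apply, mul_sum]
  have rhs : ((A ⊗ₖ (1 : Matrix (Fin dM) (Fin dM) ℂ)) * X).trace
      = ∑ s, ∑ m, ∑ s', A s s' * X (s', m) (s, m) := by
    simp [trace, mul_apply, Fintype.sum_prod_type, one_apply]
  rw [lhs, rhs]
  exact sum_congr rfl fun _ _ => sum_comm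

variable (q : Fin dM → ℝ)

lemma isHermitian_coherentOp {ρ : Matrix (Fin dS) (Fin dS) ℂ} (hρ : ρ.IsHermitian)
    (U : Matrix (Fin dS × Fin dM) (Fin dS × Fin dM) ℂ) : (coherentOp q U ρ).IsHermitian := by
  have hτ : (diagonal fun j => (q j : ℂ)).IsHermitian :=
    isHermitian_diagonal_of_self_adjoint _ (funext fun j => Complex.conj_ofReal (q j))
  have hρτ : (ρ ⊗ₖ diagonal fun j => (q j : ℂ)).IsHermitian := by
    rw [IsHermitian, conjTranspose_kronecker, hρ.eq, hτ.eq]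
  rw [IsHermitian, coherentOp, conjTranspose_ptraceM, (isHermitian_mul_mul_conjTranspose U hρτ).eq]

lemma trace_coherentOp (hq : ∑ j, q j = 1) {U : Matrix (Fin dS × Fin dM) (Fin dS × Fin dM) ℂ}
    (hU : U ∈ unitaryGroup _ ℂ) (ρ : Matrix (Fin dS) (Fin dS) ℂ) :
    (coherentOp q U ρ).trace = ρ.trace := by
  have hUU : Uᴴ * U = 1 := mem_unitaryGroup_iff'.1 hU
  rw [coherentOp, trace_ptraceM, trace_mul_cycle, hUU, Matrix.one_mul, trace_kronecker,
    trace_diagonal, ← Complex.ofReal_sum, hq, Complex.ofReal_one, mul_one]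

lemma exists_conj_kronecker_eq_conj_diagonal {ρ : Matrix (Fin dS) (Fin dS) ℂ}
    (hρ : ρ.IsHermitian) {U : Matrix (Fin dS × Fin dM) (Fin dS × Fin dM) ℂ}
    (hU : U ∈ unitaryGroup _ ℂ) :
    ∃ N ∈ unitaryGroup (Fin dS × Fin dM) ℂ,
      U * (ρ ⊗ₖ diagonal fun j => (q j : ℂ)) * Uᴴ
        = N * diagonal (fun α => ((hρ.eigenvalues α.1 * q α.2 : ℝ) : ℂ)) * Nᴴ := by
  set V : Matrix (Fin dS) (Fin dS) ℂ := (hρ.eigenvectorUnitary : Matrix (Fin dS) (Fin dS) ℂ)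
  refine ⟨U * (V ⊗ₖ 1), mul_mem hU (kronecker_mem_unitary hρ.eigenvectorUnitary.2 (one_mem _)),
    ?_⟩
  have hρτ : ρ ⊗ₖ (diagonal fun j => (q j : ℂ)) = (V ⊗ₖ 1)
      * (diagonal (fun i => (hρ.eigenvalues i : ℂ)) ⊗ₖ diagonal fun j => (q j : ℂ))
      * (V ⊗ₖ 1)ᴴ := by
    rw [conjTranspose_kronecker, conjTranspose_one, ← mul_kronecker_mul, ← mul_kronecker_mul,
      Matrix.mul_one, Matrix.one_mul, ← hρ.spectral_decomposition]
  rw [hρτ, diagonal_kronecker_diagonal, conjTranspose_mul]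
  simp only [Matrix.mul_assoc, Complex.ofReal_mul]

end CoherentOp

section Cycles

variable {dS dM : ℕ} {g : ℝ} {q : Fin dM → ℝ}

theorem isMajorizedBy_pstar_coherentOp (hg0 : 0 ≤ g) (hg1 : g ≤ 1) (hq0 : ∀ t, 0 ≤ q t)
    (hq1 : ∑ t, q t = 1) (hgq : ∀ t t', g * q t' ≤ q t) {ρ : Matrix (Fin dS) (Fin dS) ℂ}
    (hρ : ρ.IsHermitian) (hmaj : IsMajorizedBy (eigVecDesc ρ) (pstar g dS))
    {U : Matrix (Fin dS × Fin dM) (Fin dS × Fin dM) ℂ} (hU : U ∈ unitaryGroup _ ℂ) :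
    IsMajorizedBy (eigVecDesc (coherentOp q U ρ)) (pstar g dS) := by
  have hψ := isHermitian_coherentOp q hρ U
  have hx : ∀ s : Finset (Fin dS), ∑ i ∈ s, hρ.eigenvalues i ≤ pstarTopSum g dS s.card :=
    fun s => by
      have hs : s.card ≤ dS := by simpa using s.card_le_univ
      calc ∑ i ∈ s, hρ.eigenvalues i ≤ sumKLargest (eigVecDesc ρ) s.card := by
            rw [sumKLargest_eigVecDesc hρ]
            exact sum_le_sumKLargest _ s
        _ ≤ sumKLargest (pstar g dS) s.card := hmaj.sumKLargest_le (by simpa using hs)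
        _ = pstarTopSum g dS s.card := sumKLargest_pstar hg0 hg1 hs
  refine ⟨by rw [sum_eigVecDesc hψ, trace_coherentOp q hq1 hU, ← sum_eigVecDesc hρ, hmaj.1],
    fun k _ hk => ?_⟩
  rw [sumKLargest_eigVecDesc hψ, sumKLargest_pstar hg0 hg1 (by simpa using hk)]
  refine sumKLargest_le hk fun s hs => ?_
  obtain ⟨P, hP, hPtr, hPψ⟩ := exists_isEffect_re_trace_mul_eq hψ s
  obtain ⟨N, hN, hX⟩ := exists_conj_kronecker_eq_conj_diagonal q hρ hU
  have hPtr' : (P ⊗ₖ (1 : Matrix (Fin dM) (Fin dM) ℂ)).trace = ((k * dM : ℕ) : ℂ) := by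
    rw [trace_kronecker, hPtr, trace_one, hs]
    simp
  calc ∑ i ∈ s, hψ.eigenvalues i
      = ((P ⊗ₖ 1) * (N * diagonal (fun α : Fin dS × Fin dM => ((hρ.eigenvalues α.1 * q α.2 : ℝ) : ℂ))
          * Nᴴ)).trace.re := by
        rw [← hPψ, coherentOp, trace_mul_ptraceM, hX]
    _ ≤ sumKLargest (fun α : Fin dS × Fin dM => hρ.eigenvalues α.1 * q α.2) (k * dM) :=
        hP.kronecker_one.re_trace_mul_le_sumKLargest hPtr' hN _
    _ ≤ pstarTopSum g dS k := by
        simpa using sumKLargest_mul_le_pstarTopSum (κ := Fin dM) hg0 hg1 hx hq0 hq1 hgq hk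

theorem isMajorizedBy_pstar_foldl_coherentOp (hg0 : 0 ≤ g) (hg1 : g ≤ 1)
    (hq0 : ∀ t, 0 ≤ q t) (hq1 : ∑ t, q t = 1) (hgq : ∀ t t', g * q t' ≤ q t)
    (L : List (Matrix (Fin dS × Fin dM) (Fin dS × Fin dM) ℂ))
    (hL : ∀ V ∈ L, V ∈ unitaryGroup _ ℂ) {ρ : Matrix (Fin dS) (Fin dS) ℂ}
    (hρ : ρ.IsHermitian) (hmaj : IsMajorizedBy (eigVecDesc ρ) (pstar g dS)) :
    IsMajorizedBy (eigVecDesc (L.foldl (fun σ V => coherentOp q V σ) ρ)) (pstar g dS) := by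
  induction L generalizing ρ with
  | nil => exact hmaj
  | cons V L ih =>
    exact ih (fun W hW => hL W (List.mem_cons_of_mem V hW)) (isHermitian_coherentOp q hρ V)
      (isMajorizedBy_pstar_coherentOp hg0 hg1 hq0 hq1 hgq hρ hmaj (hL V List.mem_cons_self))

end Cycles

lemma gibbsVec_nonneg {m : ℕ} (β : ℝ) (E : Fin m → ℝ) (j : Fin m) : 0 ≤ gibbsVec β E j :=
  div_nonneg (Real.exp_pos _).le (sum_nonneg fun _ _ => (Real.exp_pos _).le)

lemma sum_gibbsVec {m : ℕ} (hm : 0 < m) (β : ℝ) (E : Fin m → ℝ) : ∑ j, gibbsVec β E j = 1 := by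
  unfold gibbsVec
  rw [← sum_div, div_self (sum_pos (fun _ _ => Real.exp_pos _) ⟨⟨0, hm⟩, mem_univ _⟩).ne']

lemma exp_mul_gibbsVec_le {m : ℕ} {β : ℝ} (hβ : 0 ≤ β) (E : Fin m → ℝ) {e : ℝ} {t t' : Fin m}
    (ht : E t ≤ e) (ht' : 0 ≤ E t') :
    Real.exp (-(β * e)) * gibbsVec β E t' ≤ gibbsVec β E t := by
  rw [gibbsVec, gibbsVec, mul_div_assoc', ← Real.exp_add]
  refine div_le_div_of_nonneg_right (Real.exp_le_exp.2 ?_)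
    (sum_nonneg fun _ _ => (Real.exp_pos _).le)
  nlinarith

theorem multi_cycle_bound_general {dS dM : ℕ} (hdM : 0 < dM)
    (β : ℝ) (hβ : 0 < β)
    (E : Fin dM → ℝ) (hmono : Monotone E) (hE0 : E ⟨0, hdM⟩ = 0)
    (g : ℝ) (hg : g = Real.exp (-(β * E ⟨dM - 1, Nat.sub_lt hdM Nat.one_pos⟩)))
    (ρ : Matrix (Fin dS) (Fin dS) ℂ) (hρ : ρ.PosSemidef)
    (hmaj : IsMajorizedBy (eigVecDesc ρ) (pstar g dS))
    {n : ℕ}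
    (U : Fin n → Matrix (Fin dS × Fin dM) (Fin dS × Fin dM) ℂ)
    (hU : ∀ i, U i ∈ Matrix.unitaryGroup (Fin dS × Fin dM) ℂ) :
    IsMajorizedBy (eigVecDesc (coherentSeq (gibbsVec β E) U ρ)) (pstar g dS) := by
  have hE_nonneg : ∀ t, 0 ≤ E t := fun t => hE0 ▸ hmono (Fin.mk_le_of_le_val (Nat.zero_le _))
  have hE_le : ∀ t, E t ≤ E ⟨dM - 1, Nat.sub_lt hdM Nat.one_pos⟩ := fun t =>
    hmono (Fin.le_def.2 (Nat.le_sub_one_of_lt t.isLt))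
  have hg1 : g ≤ 1 := hg ▸ Real.exp_le_one_iff.2 (neg_nonpos.2 (mul_nonneg hβ.le (hE_nonneg _)))
  have hL : ∀ V ∈ List.ofFn U, V ∈ unitaryGroup _ ℂ := fun V hV => by
    obtain ⟨i, rfl⟩ := List.mem_ofFn.1 hV
    exact hU i
  exact isMajorizedBy_pstar_foldl_coherentOp (hg ▸ (Real.exp_pos _).le) hg1
    (gibbsVec_nonneg β E) (sum_gibbsVec hdM β E)
    (fun t t' => hg ▸ exp_mul_gibbsVec_le hβ.le E (hE_le t) (hE_nonneg t')) _ hL hρ.1 hmaj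

/-- Universal bound, any number of cycles. If the eigenvalue vector of `ρ` is
majorized by `p*(g, d_S)` with `g = e^{−β ℰ_max}`, then so is that of
`Λ_{U_n} ∘ ⋯ ∘ Λ_{U_1}(ρ)` for any sequence of unitaries. -/
theorem multi_cycle_bound {dS dM : ℕ} (hdS : 0 < dS) (hdM : 0 < dM)
    (β : ℝ) (hβ : 0 < β)
    (E : Fin dM → ℝ) (hmono : Monotone E) (hE0 : E ⟨0, hdM⟩ = 0)
    (g : ℝ) (hg : g = Real.exp (-(β * E ⟨dM - 1, Nat.sub_lt hdM Nat.one_pos⟩)))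
    (ρ : Matrix (Fin dS) (Fin dS) ℂ) (hρ : ρ.PosSemidef) (hρtr : ρ.trace = 1)
    (hmaj : IsMajorizedBy (eigVecDesc ρ) (pstar g dS))
    {n : ℕ} (hn : 1 ≤ n)
    (U : Fin n → Matrix (Fin dS × Fin dM) (Fin dS × Fin dM) ℂ)
    (hU : ∀ i, U i ∈ Matrix.unitaryGroup (Fin dS × Fin dM) ℂ) :
    IsMajorizedBy (eigVecDesc (coherentSeq (gibbsVec β E) U ρ)) (pstar g dS) :=
  multi_cycle_bound_general hdM β hβ E hmono hE0 g hg ρ hρ hmaj U hU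
end

section
/- For every probability vector p ∈ ℝ^d with decreasing entries, the limit p^∞ = lim_{n→∞} B^n(p) exists and is a fixed point of B; that is, Δ_i(p^∞) ≤ 0 for all i = 1,…,d−1, so B(p^∞) = p^∞. -/
open Filter Topology Kronecker Matrix
open scoped ComplexOrder

/-!
Track the prefix sums `P_m(q) = q_0 + ⋯ + q_{m-1}`. One max-swap moves the mass `Δ_k̄ > 0`
from level `k̄` to level `k̄ - 1`, which raises `P_k̄` by `Δ_k̄` and leaves the other prefix sums
alone; the decreasing rearrangement can only raise prefix sums further (rearrangement
inequality). Along the iterates every prefix sum is thus nondecreasing and bounded by the total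
mass, so it converges, and so do the entries. Since `max_i Δ_i(Bⁿ p)` is at most the increase of
`∑_m P_m` in the `n`-th step, which tends to `0`, the limit has no positive `Δ_i` and is fixed.
-/

open Finset

lemma sortDesc_antitone {n : ℕ} (v : Fin n → ℝ) : Antitone (sortDesc v) :=
  fun _ _ hij => Tuple.monotone_sort v (Fin.rev_le_rev.mpr hij)

section PrefixSum

variable {d : ℕ}

noncomputable def prefixSum (q : Fin d → ℝ) (m : ℕ) : ℝ :=
  ∑ i ∈ univ.filter fun i : Fin d => (i : ℕ) < m, q i

lemma continuous_prefixSum (m : ℕ) : Continuous fun q : Fin d → ℝ => prefixSum q m := by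
  unfold prefixSum; fun_prop

lemma prefixSum_succ_sub (q : Fin d → ℝ) (i : Fin d) :
    prefixSum q (i + 1) - prefixSum q i = q i := by
  have : univ.filter (fun j : Fin d => (j : ℕ) < i + 1) =
      insert i (univ.filter fun j : Fin d => (j : ℕ) < i) := by
    ext j
    simp only [mem_filter, mem_univ, true_and, mem_insert, Fin.ext_iff]
    omega
  rw [prefixSum, prefixSum, this, sum_insert (by simp)]
  ring

lemma prefixSum_le_sum {q : Fin d → ℝ} (hq : ∀ i, 0 ≤ q i) (m : ℕ) :
    prefixSum q m ≤ ∑ i, q i :=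
  sum_le_univ_sum_of_nonneg hq

lemma prefixSum_add_single_sub_single (q : Fin d → ℝ) (j k : Fin d) (t : ℝ) (m : ℕ) :
    prefixSum (q + Pi.single j t - Pi.single k t) m =
      prefixSum q m + (if (j : ℕ) < m then t else 0) - (if (k : ℕ) < m then t else 0) := by
  classical
  simp [prefixSum, sum_add_distrib, sum_sub_distrib, sum_pi_single']

lemma prefixSum_eq_sum_mul (q : Fin d → ℝ) (m : ℕ) :
    prefixSum q m = ∑ i : Fin d, (if (i : ℕ) < m then 1 else 0) * q i := by
  simp [prefixSum, sum_filter]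

lemma prefixSum_le_prefixSum_sortDesc (v : Fin d → ℝ) (m : ℕ) :
    prefixSum v m ≤ prefixSum (sortDesc v) m := by
  set σ : Equiv.Perm (Fin d) := Fin.revPerm.trans (Tuple.sort v)
  have hv : v = sortDesc v ∘ σ.symm := funext fun i => by simp [sortDesc, σ]
  have hind : Antitone fun i : Fin d => if (i : ℕ) < m then (1 : ℝ) else 0 := by
    intro i j hij
    have : (i : ℕ) ≤ j := hij
    dsimp only
    split_ifs <;> first | rfl | omega | norm_num
  rw [prefixSum_eq_sum_mul, prefixSum_eq_sum_mul]
  conv_lhs => rw [hv]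
  exact (hind.monovary (sortDesc_antitone v)).sum_mul_comp_perm_le_sum_mul

noncomputable def prefixMass (q : Fin d → ℝ) : ℝ :=
  ∑ m ∈ range d, prefixSum q m

lemma continuous_prefixMass : Continuous (prefixMass : (Fin d → ℝ) → ℝ) :=
  continuous_finsetSum _ fun m _ => continuous_prefixSum m

lemma exists_tendsto_of_monotone_prefixSum {x : ℕ → Fin d → ℝ}
    (hmono : ∀ m, Monotone fun n => prefixSum (x n) m)
    (hbdd : ∀ m, BddAbove (Set.range fun n => prefixSum (x n) m)) :
    ∃ L, Tendsto x atTop (𝓝 L) := by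
  have hc : ∀ m, Tendsto (fun n => prefixSum (x n) m) atTop (𝓝 (⨆ n, prefixSum (x n) m)) :=
    fun m => tendsto_atTop_ciSup (hmono m) (hbdd m)
  refine ⟨fun i => (⨆ n, prefixSum (x n) (i + 1)) - ⨆ n, prefixSum (x n) i,
    tendsto_pi_nhds.2 fun i => ?_⟩
  simpa only [prefixSum_succ_sub] using (hc (i + 1)).sub (hc i)

lemma tendsto_prefixMass_succ_sub {x : ℕ → Fin d → ℝ} {L : Fin d → ℝ}
    (hx : Tendsto x atTop (𝓝 L)) :
    Tendsto (fun n => prefixMass (x (n + 1)) - prefixMass (x n)) atTop (𝓝 0) := by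
  have h := (continuous_prefixMass.tendsto L).comp hx
  simpa using (h.comp (tendsto_add_atTop_nat 1)).sub h

end PrefixSum

section MaxSwap

variable (a b : ℝ) {d : ℕ}

lemma continuous_delta (i : Fin d) : Continuous fun q : Fin d → ℝ => delta a b q i := by
  unfold delta
  split_ifs <;> fun_prop

lemma val_ne_zero_of_delta_pos {q : Fin d → ℝ} {k : Fin d} (hk : 0 < delta a b q k) :
    (k : ℕ) ≠ 0 := by
  intro h0
  rw [delta, if_pos h0] at hk
  exact hk.false

lemma delta_eq_of_val_succ_eq {q : Fin d → ℝ} {j k : Fin d} (hjk : (j : ℕ) + 1 = k) :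
    delta a b q k = a * q k - b * q j := by
  rw [delta, if_neg (by omega)]
  congr 3
  ext
  simp only
  omega

lemma maxSwap_eq_self_of_forall_delta_nonpos {q : Fin d → ℝ} (h : ∀ i, delta a b q i ≤ 0) :
    maxSwap a b q = q := by
  unfold maxSwap
  rw [dif_neg]
  rintro ⟨k, hk, -⟩
  exact (h k).not_gt hk

lemma maxSwap_eq_self_or_exists (q : Fin d → ℝ) :
    (∀ i, delta a b q i ≤ 0) ∧ maxSwap a b q = q ∨
    ∃ j k : Fin d, (j : ℕ) + 1 = k ∧ 0 < delta a b q k ∧ (∀ i, delta a b q i ≤ delta a b q k) ∧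
      maxSwap a b q = sortDesc (q + Pi.single j (delta a b q k) - Pi.single k (delta a b q k)) := by
  classical
  by_cases h : ∃ k, 0 < delta a b q k ∧ ∀ i, delta a b q i ≤ delta a b q k
  · right
    obtain ⟨hpos, hmax⟩ := h.choose_spec
    have hk := val_ne_zero_of_delta_pos a b hpos
    refine ⟨⟨h.choose - 1, by omega⟩, h.choose, by simp; omega, hpos, hmax, ?_⟩
    unfold maxSwap
    rw [dif_pos h]
    congr 1
    funext i
    simp only [Pi.add_apply, Pi.sub_apply, Pi.single_apply, Fin.ext_iff]
    split_ifs with hik <;> first | omega | (rw [Fin.ext hik]; ring) | ring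
  · left
    have hdelta : ∀ i, delta a b q i ≤ 0 := fun i => by
      have : Nonempty (Fin d) := ⟨i⟩
      obtain ⟨k, hk⟩ := Finite.exists_max (delta a b q)
      exact (hk i).trans (not_lt.1 fun hpos => h ⟨k, hpos, hk⟩)
    exact ⟨hdelta, maxSwap_eq_self_of_forall_delta_nonpos a b hdelta⟩

lemma maxSwap_nonneg (ha : a ≤ 1) (hb : 0 ≤ b) {q : Fin d → ℝ} (hq : ∀ i, 0 ≤ q i)
    (i : Fin d) :
    0 ≤ maxSwap a b q i := by
  classical
  rcases maxSwap_eq_self_or_exists a b q with ⟨-, hB⟩ | ⟨j, k, hjk, hpos, -, hB⟩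
  · rw [hB]; exact hq i
  · have hk : 0 ≤ q k - delta a b q k := by
      rw [delta_eq_of_val_succ_eq a b hjk]
      nlinarith [hq j, hq k]
    have hjk' : j ≠ k := fun h => by rw [h] at hjk; omega
    have hw (l : Fin d) :
        0 ≤ (q + Pi.single j (delta a b q k) - Pi.single k (delta a b q k) : Fin d → ℝ) l := by
      simp only [Pi.add_apply, Pi.sub_apply, Pi.single_apply]
      split_ifs with hl hl' <;> subst_vars
      · exact absurd rfl hjk'
      · linarith [hq l]
      · simpa using hk
      · simpa using hq l
    rw [hB]
    exact hw _

lemma sum_maxSwap (q : Fin d → ℝ) : ∑ i, maxSwap a b q i = ∑ i, q i := by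
  classical
  rcases maxSwap_eq_self_or_exists a b q with ⟨-, hB⟩ | ⟨j, k, -, -, -, hB⟩
  · rw [hB]
  · rw [hB, sum_sortDesc]
    simp [sum_add_distrib, sum_sub_distrib]

lemma prefixSum_le_prefixSum_maxSwap (q : Fin d → ℝ) (m : ℕ) :
    prefixSum q m ≤ prefixSum (maxSwap a b q) m := by
  rcases maxSwap_eq_self_or_exists a b q with ⟨-, hB⟩ | ⟨j, k, hjk, hpos, -, hB⟩
  · rw [hB]
  · rw [hB]
    refine le_trans ?_ (prefixSum_le_prefixSum_sortDesc _ m)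
    rw [prefixSum_add_single_sub_single]
    split_ifs <;> first | omega | linarith

lemma delta_le_prefixMass_maxSwap_sub (q : Fin d → ℝ) (i : Fin d) :
    delta a b q i ≤ prefixMass (maxSwap a b q) - prefixMass q := by
  have hmass : 0 ≤ prefixMass (maxSwap a b q) - prefixMass q := by
    rw [prefixMass, prefixMass, ← sum_sub_distrib]
    exact sum_nonneg fun m _ => sub_nonneg.2 (prefixSum_le_prefixSum_maxSwap a b q m)
  rcases maxSwap_eq_self_or_exists a b q with ⟨hΔ, -⟩ | ⟨j, k, hjk, -, hmax, hB⟩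
  · exact (hΔ i).trans hmass
  · have hk : delta a b q k ≤ prefixSum (maxSwap a b q) k - prefixSum q k := by
      have := prefixSum_le_prefixSum_sortDesc
        (q + Pi.single j (delta a b q k) - Pi.single k (delta a b q k)) k
      rw [prefixSum_add_single_sub_single, if_pos (by omega), if_neg (lt_irrefl _)] at this
      rw [hB]
      linarith
    calc delta a b q i ≤ delta a b q k := hmax i
      _ ≤ prefixSum (maxSwap a b q) k - prefixSum q k := hk
      _ ≤ prefixMass (maxSwap a b q) - prefixMass q := by
        rw [prefixMass, prefixMass, ← sum_sub_distrib]
        exact single_le_sum (f := fun m => prefixSum (maxSwap a b q) m - prefixSum q m)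
          (fun m _ => sub_nonneg.2 (prefixSum_le_prefixSum_maxSwap a b q m))
          (mem_range.2 k.isLt)

end MaxSwap

theorem maxSwap_limit_is_fixed_point_general {d : ℕ}
    (a b : ℝ) (hb : 0 < b) (hab : a + b ≤ 1)
    (p : Fin d → ℝ) (hnn : ∀ i, 0 ≤ p i) :
    ∃ L : Fin d → ℝ,
      Filter.Tendsto (fun n : ℕ => (maxSwap a b)^[n] p) Filter.atTop (nhds L) ∧
      (∀ i : Fin d, (i : ℕ) ≠ 0 → delta a b L i ≤ 0) ∧
      maxSwap a b L = L := by
  set x : ℕ → Fin d → ℝ := fun n => (maxSwap a b)^[n] p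
  have hx_succ (n : ℕ) : x (n + 1) = maxSwap a b (x n) := Function.iterate_succ_apply' _ n p
  have hx_nonneg (n : ℕ) : ∀ i, 0 ≤ x n i := by
    induction n with
    | zero => exact hnn
    | succ n ih => rw [hx_succ]; exact maxSwap_nonneg a b (by linarith) hb.le ih
  have hx_sum (n : ℕ) : ∑ i, x n i = ∑ i, p i := by
    induction n with
    | zero => rfl
    | succ n ih => rw [hx_succ, sum_maxSwap, ih]
  obtain ⟨L, hL⟩ := exists_tendsto_of_monotone_prefixSum
    (fun m => monotone_nat_of_le_succ fun n => hx_succ n ▸ prefixSum_le_prefixSum_maxSwap a b _ m)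
    fun m => ⟨∑ i, p i, Set.forall_mem_range.2 fun n =>
      hx_sum n ▸ prefixSum_le_sum (hx_nonneg n) m⟩
  have hΔ (i : Fin d) : delta a b L i ≤ 0 :=
    le_of_tendsto_of_tendsto' (((continuous_delta a b i).tendsto L).comp hL)
      (tendsto_prefixMass_succ_sub hL)
      fun n => hx_succ n ▸ delta_le_prefixMass_maxSwap_sub a b (x n) i
  exact ⟨L, hL, fun i _ => hΔ i, maxSwap_eq_self_of_forall_delta_nonpos a b hΔ⟩

/-- The limit `p^∞` of the iterates `B^n(p)` exists and is a fixed point of `B`: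
`Δ_i(p^∞) ≤ 0` for all `i = 1,…,d−1`, so `B(p^∞) = p^∞`. -/
theorem maxSwap_limit_is_fixed_point {d : ℕ} (hd : 2 ≤ d)
    (a b : ℝ) (hb : 0 < b) (hba : b ≤ a) (hab : a + b ≤ 1)
    (p : Fin d → ℝ) (hnn : ∀ i, 0 ≤ p i) (hsum : ∑ i, p i = 1) (hdec : Antitone p) :
    ∃ L : Fin d → ℝ,
      Filter.Tendsto (fun n : ℕ => (maxSwap a b)^[n] p) Filter.atTop (nhds L) ∧
      (∀ i : Fin d, (i : ℕ) ≠ 0 → delta a b L i ≤ 0) ∧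
      maxSwap a b L = L :=
  maxSwap_limit_is_fixed_point_general a b hb hab p hnn
end

section
/- Let a ≥ b > 0 with a + b ≤ 1 and g = b/a. If a probability vector f ∈ ℝ^d with decreasing entries satisfies a·f_i ≤ b·f_{i−1} for all i = 1,…,d−1 (i.e., f is a fixed point of the max-swap map B), then f majorizes p*(g,d). -/
open Filter Topology Kronecker Matrix
open scoped ComplexOrder

/-! A fixed point satisfies `f_{i+1} ≤ g·f_i`, hence `f_j·g^i ≤ f_i·g^j` for `i ≤ j`: relative to
`p*`, the mass of `f` sits at the low indices. Summing these cross inequalities over `i` in a prefix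
`A` and `j` outside it gives `(∑_A g^i)·∑ f ≤ (∑_A f)·∑ g^i`, i.e. `∑_A p* ≤ ∑_A f`; as `f` and `p*`
are both decreasing, these prefix sums are their sums of largest entries. -/

namespace Finset

variable {ι : Type*} [DecidableEq ι]

theorem sum_le_sum_of_card_eq_of_forall_sdiff_le {M : Type*} [AddCommMonoid M] [LinearOrder M]
    [IsOrderedAddMonoid M] {s t : Finset ι} (v : ι → M) (hst : #s = #t)
    (h : ∀ x ∈ s \ t, ∀ y ∈ t \ s, v x ≤ v y) : ∑ i ∈ s, v i ≤ ∑ i ∈ t, v i := by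
  rw [← sum_inter_add_sum_sdiff s t, ← sum_inter_add_sum_sdiff t s, inter_comm t s]
  refine add_le_add le_rfl ?_
  rcases (s \ t).eq_empty_or_nonempty with hempty | hne
  · have : t \ s = ∅ := by
      rw [← card_eq_zero, ← card_sdiff_comm hst, hempty, card_empty]
    simp [hempty, this]
  calc ∑ x ∈ s \ t, v x ≤ #(s \ t) • (s \ t).sup' hne v :=
        sum_le_card_nsmul _ _ _ fun x hx ↦ le_sup' v hx
    _ = #(t \ s) • (s \ t).sup' hne v := by rw [card_sdiff_comm hst]
    _ ≤ ∑ y ∈ t \ s, v y :=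
        card_nsmul_le_sum _ _ _ fun y hy ↦ sup'_le hne v fun x hx ↦ h x hx y hy

theorem sum_mul_sum_le_sum_mul_sum_of_mul_le_mul [Fintype ι] {R : Type*} [CommRing R]
    [PartialOrder R] [IsOrderedRing R] (A : Finset ι) (f w : ι → R)
    (h : ∀ i ∈ A, ∀ j ∉ A, f j * w i ≤ f i * w j) :
    (∑ i ∈ A, w i) * ∑ i, f i ≤ (∑ i ∈ A, f i) * ∑ i, w i := by
  rw [← sum_add_sum_compl A f, ← sum_add_sum_compl A w, mul_add, mul_add,
    mul_comm (∑ i ∈ A, w i)]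
  refine add_le_add le_rfl ?_
  rw [sum_mul_sum, sum_mul_sum]
  refine sum_le_sum fun i hi ↦ sum_le_sum fun j hj ↦ ?_
  rw [mul_comm]
  exact h i hi j (mem_compl.mp hj)

end Finset

section Prefix

open Finset

variable {d k : ℕ}

theorem Antitone.sum_le_sum_filter_val_lt {M : Type*} [AddCommMonoid M] [LinearOrder M]
    [IsOrderedAddMonoid M] {v : Fin d → M} (hv : Antitone v) (hk : k ≤ d)
    {s : Finset (Fin d)} (hs : #s = k) : ∑ i ∈ s, v i ≤ ∑ i : Fin d with i.val < k, v i := by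
  have hcard : #s = #{i : Fin d | i.val < k} := by rw [Fin.card_filter_val_lt, min_eq_right hk, hs]
  refine sum_le_sum_of_card_eq_of_forall_sdiff_le v hcard fun x hx y hy ↦ hv ?_
  simp only [Finset.mem_sdiff, Finset.mem_filter, Finset.mem_univ, true_and] at hx hy
  exact Fin.le_def.mpr (by omega)

theorem Antitone.sumKLargest_eq {v : Fin d → ℝ} (hv : Antitone v) (hk : k ≤ d) :
    sumKLargest v k = ∑ i : Fin d with i.val < k, v i := by
  refine IsGreatest.csSup_eq ⟨⟨_, by rw [Fin.card_filter_val_lt, min_eq_right hk], rfl⟩, ?_⟩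
  rintro x ⟨s, hs, rfl⟩
  exact hv.sum_le_sum_filter_val_lt hk hs

end Prefix

theorem mul_pow_le_mul_pow_of_le_mul {d : ℕ} {f : Fin d → ℝ} {g : ℝ} (hg : 0 ≤ g)
    (hf : ∀ i j : Fin d, (j : ℕ) = i + 1 → f j ≤ g * f i) {i j : Fin d} (hij : i ≤ j) :
    f j * g ^ (i : ℕ) ≤ f i * g ^ (j : ℕ) := by
  obtain ⟨n, hn⟩ : ∃ n, (j : ℕ) = i + n := ⟨j - i, by rw [Fin.le_def] at hij; omega⟩
  induction n generalizing j with
  | zero => obtain rfl : j = i := Fin.ext hn; rfl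
  | succ n ih =>
    set j' : Fin d := ⟨i + n, by omega⟩
    have hprev : f j' * g ^ (i : ℕ) ≤ f i * g ^ (i + n) :=
      ih (Fin.le_def.mpr (Nat.le_add_right _ _)) rfl
    calc f j * g ^ (i : ℕ) ≤ g * f j' * g ^ (i : ℕ) :=
          mul_le_mul_of_nonneg_right (hf j' j (by rw [hn]; rfl)) (pow_nonneg hg _)
      _ = g * (f j' * g ^ (i : ℕ)) := by ring
      _ ≤ g * (f i * g ^ (i + n)) := mul_le_mul_of_nonneg_left hprev hg
      _ = f i * g ^ (j : ℕ) := by rw [hn]; ring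

theorem antitone_pstar {g : ℝ} (d : ℕ) (hg₀ : 0 ≤ g) (hg₁ : g ≤ 1) : Antitone (pstar g d) :=
  fun _ _ hij ↦ div_le_div_of_nonneg_right (pow_le_pow_of_le_one hg₀ hg₁ hij)
    (Finset.sum_nonneg fun _ _ ↦ pow_nonneg hg₀ _)

theorem sum_pow_fin_pos {g : ℝ} {d : ℕ} (hg : 0 ≤ g) (hd : d ≠ 0) :
    0 < ∑ j : Fin d, g ^ (j : ℕ) := by
  rw [Fin.sum_univ_eq_sum_range (g ^ ·)]
  exact geom_sum_pos hg hd

theorem sum_pstar {g : ℝ} {d : ℕ} (hg : 0 ≤ g) (hd : d ≠ 0) : ∑ i, pstar g d i = 1 := by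
  simp only [pstar]
  rw [← Finset.sum_div, div_self (sum_pow_fin_pos hg hd).ne']

theorem fixed_points_majorize_pstar_general {d : ℕ}
    (a b : ℝ) (hb : 0 < b) (hba : b ≤ a)
    (f : Fin d → ℝ) (hsum : ∑ i, f i = 1) (hdec : Antitone f)
    (hfix : ∀ i : Fin d, (i : ℕ) ≠ 0 →
      a * f i ≤ b * f ⟨(i : ℕ) - 1, Nat.lt_of_le_of_lt (Nat.sub_le _ _) i.isLt⟩) :
    IsMajorizedBy (pstar (b / a) d) f := by
  have ha : 0 < a := hb.trans_le hba
  have hg₀ : 0 ≤ b / a := by positivity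
  have hd : d ≠ 0 := by rintro rfl; simp at hsum
  have hdecay (i j : Fin d) (hij : i ≤ j) : f j * (b / a) ^ (i : ℕ) ≤ f i * (b / a) ^ (j : ℕ) := by
    refine mul_pow_le_mul_pow_of_le_mul hg₀ (fun i j hj ↦ ?_) hij
    have hstep := hfix j (by omega)
    simp only [hj, Nat.add_sub_cancel, Fin.eta] at hstep
    rwa [div_mul_eq_mul_div, le_div_iff₀ ha, mul_comm]
  refine ⟨by rw [sum_pstar hg₀ hd, hsum], fun k _ hk ↦ ?_⟩
  rw [Fintype.card_fin] at hk
  rw [(antitone_pstar d hg₀ ((div_le_one ha).mpr hba)).sumKLargest_eq hk, hdec.sumKLargest_eq hk]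
  simp only [pstar]
  rw [← Finset.sum_div, div_le_iff₀ (sum_pow_fin_pos hg₀ hd)]
  have hprefix := Finset.sum_mul_sum_le_sum_mul_sum_of_mul_le_mul {i : Fin d | i.val < k} f
    (fun i ↦ (b / a) ^ (i : ℕ)) fun i hi j hj ↦ hdecay i j <| by
      simp only [Finset.mem_filter, Finset.mem_univ, true_and, not_lt] at hi hj
      exact Fin.le_def.mpr (by omega)
  rwa [hsum, mul_one] at hprefix

/-- Every fixed point of the max-swap map (a decreasing probability vector `f`
with `a·f_i ≤ b·f_{i−1}` for all `i = 1,…,d−1`) majorizes `p*(g,d)` with `g = b/a`. -/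
theorem fixed_points_majorize_pstar {d : ℕ} (hd : 2 ≤ d)
    (a b : ℝ) (hb : 0 < b) (hba : b ≤ a) (hab : a + b ≤ 1)
    (f : Fin d → ℝ) (hnn : ∀ i, 0 ≤ f i) (hsum : ∑ i, f i = 1) (hdec : Antitone f)
    (hfix : ∀ i : Fin d, (i : ℕ) ≠ 0 →
      a * f i ≤ b * f ⟨(i : ℕ) - 1, Nat.lt_of_le_of_lt (Nat.sub_le _ _) i.isLt⟩) :
    IsMajorizedBy (pstar (b / a) d) f :=
  fixed_points_majorize_pstar_general a b hb hba f hsum hdec hfix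
end
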